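/- arXiv:alg-geom/9710018 — 3 statements merged into one kernel-verified Lean document; each statement's English description precedes it below -/
import Mathlib

section
/- Let (ρ₁, …, ρₙ) be a basis of ℝⁿ with dual basis (m₁, …, mₙ) in the dual space (ℝⁿ)* (so mᵢ(ρⱼ) = δᵢⱼ). Let m_σ ∈ (ℝⁿ)*, let k ≥ 1 be an integer, let l₁, …, lₙ be real numbers with lᵢ ≥ k for every i, and let t₁, …, tₙ be nonnegative integers with t₁ + ⋯ + tₙ ≤ k. Suppose ρ ∈ ℝⁿ and c ∈ ℝ satisfy m_σ(ρ) ≥ c + k and (m_σ + lᵢ·mᵢ)(ρ) ≥ c for every i. Then (m_σ + Σᵢ tᵢ·mᵢ)(ρ) ≥ c + (k − Σᵢ tᵢ). -/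
/-- The key estimate in the proof of Lemma 3.1(2): if `m_σ(ρ) ≥ c + k` and
`(m_σ + lᵢ • mᵢ)(ρ) ≥ c` for every `i`, then the constructed point
`m_σ + Σᵢ tᵢ • mᵢ` pairs with `ρ` to at least `c + (k − Σᵢ tᵢ)`. -/
theorem stmt_2 (n : ℕ) (ρ : Module.Basis (Fin n) ℝ (Fin n → ℝ))
    (m : Fin n → Module.Dual ℝ (Fin n → ℝ))
    (hdual : ∀ i j : Fin n, m i (ρ j) = if i = j then (1 : ℝ) else 0)
    (mσ : Module.Dual ℝ (Fin n → ℝ))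
    (k : ℕ) (hk : 1 ≤ k)
    (l : Fin n → ℝ) (hl : ∀ i, (k : ℝ) ≤ l i)
    (t : Fin n → ℕ) (ht : ∑ i, t i ≤ k)
    (v : Fin n → ℝ) (c : ℝ)
    (hσ : mσ v ≥ c + k)
    (hedge : ∀ i, (mσ + l i • m i) v ≥ c) :
    (mσ + ∑ i, (t i : ℝ) • m i) v ≥ c + ((k : ℝ) - ∑ i, (t i : ℝ)) := by
  have hk0 : (0:ℝ) < k := by exact_mod_cast hk
  have hlpos : ∀ i, 0 < l i := fun i => lt_of_lt_of_le hk0 (hl i)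
  simp only [LinearMap.add_apply, LinearMap.sum_apply, LinearMap.smul_apply,
    smul_eq_mul] at *
  -- s i = t i / l i
  have h1 : ∀ i, (t i : ℝ) * m i v ≥ (t i / l i) * (c - mσ v) := by
    intro i
    have h := hedge i
    have h2 : l i * m i v ≥ c - mσ v := by linarith
    have h3 : (0:ℝ) ≤ t i / l i := div_nonneg (Nat.cast_nonneg _) (hlpos i).le
    have := mul_le_mul_of_nonneg_left h2 h3
    calc (t i : ℝ) * m i v = (t i / l i) * (l i * m i v) := by
          field_simp [(hlpos i).ne']
      _ ≥ (t i / l i) * (c - mσ v) := this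
  have hsum : ∑ i, (t i : ℝ) * m i v ≥ (∑ i, (t i : ℝ) / l i) * (c - mσ v) := by
    rw [Finset.sum_mul]
    exact Finset.sum_le_sum fun i _ => h1 i
  set S := ∑ i, (t i : ℝ) / l i with hS
  have hS0 : 0 ≤ S := Finset.sum_nonneg fun i _ =>
    div_nonneg (Nat.cast_nonneg _) (hlpos i).le
  have hkS : (k:ℝ) * S ≤ ∑ i, (t i : ℝ) := by
    rw [hS, Finset.mul_sum]
    have hT : ∑ i, (t i : ℝ) = ((∑ i, t i : ℕ) : ℝ) := by push_cast; ring
    refine Finset.sum_le_sum fun i _ => ?_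
    rw [mul_div_assoc']
    exact div_le_of_le_mul₀ (hlpos i).le (Nat.cast_nonneg _)
      (by nlinarith [Nat.cast_nonneg (α := ℝ) (t i), hl i])
  have hS1 : S ≤ 1 := by
    have hT : (∑ i, (t i : ℝ)) ≤ (k:ℝ) := by exact_mod_cast ht
    nlinarith
  nlinarith [hsum, hσ, hS0, hS1, hkS]
end

section
/- Let n ≥ 1 and k ≥ 1 be integers, R ⊂ ℤⁿ a finite set, and a : R → ℤ. Set P = {x ∈ (ℝⁿ)* : x(ρ) ≥ −a(ρ) for all ρ ∈ R}. Let B₁, …, B_r ⊆ R (r ≥ 1) be subsets each of which is a ℤ-basis of ℤⁿ, and for each j = 1, …, r let mʲ ∈ (ℝⁿ)* be a linear functional with mʲ(ρ) = −a(ρ) for all ρ ∈ B_j and mʲ(ρ) ≥ −a(ρ) + k for all ρ ∈ R ∖ B_j. Fix an index i, enumerate B_i = (ρ₁, …, ρₙ) with dual basis (m₁, …, mₙ), and assume that for each l = 1, …, n there is a real number λ_l ≥ k with mⁱ + λ_l·m_l ∈ P. Let k₁, …, k_r be positive integers with k₁ + ⋯ + k_r = k + 1, and for each j let tʲ : B_j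 → ℕ satisfy Σ_{ρ∈B_j} tʲ(ρ) = k_j − 1. Then the functional m := mⁱ + Σ_{l=1}^n tⁱ(ρ_l)·m_l satisfies: (a) m ∈ P; (b) m(ρ) = −a(ρ) + tⁱ(ρ) for every ρ ∈ B_i; (c) for every j ≠ i and every ρ ∈ B_j ∖ B_i, m(ρ) ≥ −a(ρ) + tʲ(ρ) + 1. -/
/-- The polytope `P_L = {x ∈ (ℝⁿ)* : x(ρ) ≥ −a(ρ) for all ρ ∈ R}`
associated to the ray data `R` and coefficients `a`. -/
def jetPolytope (n : ℕ) (R : Finset (Fin n → ℤ)) (a : (Fin n → ℤ) → ℤ) :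
    Set (Module.Dual ℝ (Fin n → ℝ)) :=
  {x | ∀ ρ ∈ R, -(a ρ : ℝ) ≤ x fun j => (ρ j : ℝ)}

/-- Lemma 3.1(2) of the paper, in combinatorial form: given a `k`-convex
collection of vertex functionals `m j` for the bases `B j ⊆ R`, edge lengths
`λ l ≥ k` at the vertex `m i`, and jet orders `k₁ + ⋯ + k_r = k + 1` with
distributions `tʲ` of size `k_j − 1`, the functional
`m i + Σ_l tⁱ(ρ_l) • m_l` lies in `P`, has the prescribed pairings on `B i`,
and strictly larger pairings on the rays of the other bases. -/
theorem stmt_3 (n k r : ℕ) (hn : 1 ≤ n) (hk : 1 ≤ k) (hr : 1 ≤ r)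
    (R : Finset (Fin n → ℤ)) (a : (Fin n → ℤ) → ℤ)
    (B : Fin r → Fin n → (Fin n → ℤ))
    (hBR : ∀ j l, B j l ∈ R)
    (hBbasis : ∀ j : Fin r, ∃ b : Module.Basis (Fin n) ℤ (Fin n → ℤ), ∀ l, b l = B j l)
    (m : Fin r → Module.Dual ℝ (Fin n → ℝ))
    (hmB : ∀ j l, m j (fun q => ((B j l) q : ℝ)) = -(a (B j l) : ℝ))
    (hmR : ∀ (j : Fin r), ∀ ρ ∈ R, ρ ∉ Set.range (B j) →
      m j (fun q => (ρ q : ℝ)) ≥ -(a ρ : ℝ) + k)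
    (i : Fin r)
    (md : Fin n → Module.Dual ℝ (Fin n → ℝ))
    (hmd : ∀ l l' : Fin n, md l (fun q => ((B i l') q : ℝ)) =
      if l = l' then (1 : ℝ) else 0)
    (lam : Fin n → ℝ) (hlam : ∀ l, (k : ℝ) ≤ lam l)
    (hedge : ∀ l, m i + lam l • md l ∈ jetPolytope n R a)
    (kk : Fin r → ℕ) (hkk : ∀ j, 1 ≤ kk j) (hkksum : ∑ j, kk j = k + 1)
    (t : Fin r → Fin n → ℕ) (ht : ∀ j, ∑ l, t j l = kk j - 1) :
    (m i + ∑ l, (t i l : ℝ) • md l) ∈ jetPolytope n R a ∧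
    (∀ l, (m i + ∑ l', (t i l' : ℝ) • md l') (fun q => ((B i l) q : ℝ)) =
      -(a (B i l) : ℝ) + t i l) ∧
    (∀ j, j ≠ i → ∀ l, B j l ∉ Set.range (B i) →
      (m i + ∑ l', (t i l' : ℝ) • md l') (fun q => ((B j l) q : ℝ)) ≥
        -(a (B j l) : ℝ) + t j l + 1) := by

  have happly : ∀ v : Fin n → ℝ,
      (m i + ∑ l, (t i l : ℝ) • md l) v = m i v + ∑ l, (t i l : ℝ) * md l v := by
    intro v
    simp [LinearMap.add_apply, LinearMap.sum_apply, LinearMap.smul_apply, smul_eq_mul]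
  have hki : kk i ≤ k + 1 := by
    rw [← hkksum]
    exact Finset.single_le_sum (fun _ _ => Nat.zero_le _) (Finset.mem_univ i)
  have hsumti : (∑ l, (t i l : ℝ)) = (kk i : ℝ) - 1 := by
    rw [← Nat.cast_sum, ht i, Nat.cast_sub (hkk i), Nat.cast_one]
  have hk' : (1 : ℝ) ≤ (k : ℝ) := by exact_mod_cast hk
  have hkpos : (0 : ℝ) < (k : ℝ) := by linarith
  have hoff : ∀ ρ ∈ R, ρ ∉ Set.range (B i) →
      (m i + ∑ l, (t i l : ℝ) • md l) (fun q => (ρ q : ℝ)) ≥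
        -(a ρ : ℝ) + (k : ℝ) - ((kk i : ℝ) - 1) := by
    intro ρ hρ hρ'
    rw [happly]
    set A : ℝ := -(a ρ : ℝ) with hA
    set Mρ : ℝ := m i (fun q => (ρ q : ℝ)) with hMρ
    have h2 : Mρ ≥ A + k := hmR i ρ hρ hρ'
    set D : ℝ := (A - Mρ) / (k : ℝ) with hDdef
    have hD : (k : ℝ) * D = A - Mρ := by
      rw [hDdef, mul_div_cancel₀ _ (ne_of_gt hkpos)]
    have hDle : D ≤ -1 := by nlinarith
    have hX : ∀ l, D ≤ md l (fun q => (ρ q : ℝ)) := by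
      intro l
      have hl := hlam l
      have hpos : (0 : ℝ) < lam l := by linarith
      have h3 : A ≤ Mρ + lam l * md l (fun q => (ρ q : ℝ)) := by
        simpa [LinearMap.add_apply, LinearMap.smul_apply, smul_eq_mul, ← hA, ← hMρ]
          using hedge l ρ hρ
      have step1 : D ≤ (A - Mρ) / lam l := by
        rw [hDdef, div_le_div_iff₀ hkpos hpos]
        nlinarith
      have step2 : (A - Mρ) / lam l ≤ md l (fun q => (ρ q : ℝ)) := by
        rw [div_le_iff₀ hpos]
        nlinarith
      linarith
    have hsum : (∑ l, (t i l : ℝ)) * D ≤ ∑ l, (t i l : ℝ) * md l (fun q => (ρ q : ℝ)) := by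
      rw [Finset.sum_mul]
      exact Finset.sum_le_sum fun l _ =>
        mul_le_mul_of_nonneg_left (hX l) (Nat.cast_nonneg _)
    rw [hsumti] at hsum
    have hS : ((kk i : ℝ) - 1) ≤ (k : ℝ) := by
      have : (kk i : ℝ) ≤ (k : ℝ) + 1 := by exact_mod_cast hki
      linarith
    have hprod : 0 ≤ ((k : ℝ) - ((kk i : ℝ) - 1)) * (-1 - D) :=
      mul_nonneg (by linarith) (by linarith)
    nlinarith [hsum, hD, h2, hprod]
  have hb : ∀ l, (m i + ∑ l', (t i l' : ℝ) • md l') (fun q => ((B i l) q : ℝ)) =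
      -(a (B i l) : ℝ) + t i l := by
    intro l
    rw [happly, hmB i l]
    have hsum : (∑ l', (t i l' : ℝ) * md l' (fun q => ((B i l) q : ℝ))) = t i l := by
      rw [Finset.sum_eq_single l]
      · rw [hmd l l, if_pos rfl, mul_one]
      · intro l' _ hne
        rw [hmd l' l, if_neg hne, mul_zero]
      · intro h; exact absurd (Finset.mem_univ l) h
    rw [hsum]
  refine ⟨?_, hb, ?_⟩
  · intro ρ hρ
    by_cases hmem : ρ ∈ Set.range (B i)
    · obtain ⟨l, rfl⟩ := hmem
      rw [hb l]
      have := Nat.cast_nonneg (α := ℝ) (t i l)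
      linarith
    · have h0 := hoff ρ hρ hmem
      have hkik : (kk i : ℝ) ≤ (k : ℝ) + 1 := by exact_mod_cast hki
      linarith
  · intro j hj l hl
    have h0 := hoff _ (hBR j l) hl
    have hpair : kk i + kk j ≤ k + 1 := by
      rw [← hkksum]
      have hsub := Finset.sum_le_sum_of_subset
        (Finset.subset_univ ({i, j} : Finset (Fin r))) (f := kk)
      rwa [Finset.sum_pair (Ne.symm hj)] at hsub
    have htj : t j l ≤ kk j - 1 := by
      rw [← ht j]
      exact Finset.single_le_sum (fun _ _ => Nat.zero_le _) (Finset.mem_univ l)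
    have c1 : (t j l : ℝ) ≤ (kk j : ℝ) - 1 := by
      have hc := (Nat.cast_le (α := ℝ)).2 htj
      rwa [Nat.cast_sub (hkk j), Nat.cast_one] at hc
    have c2 : (kk i : ℝ) + (kk j : ℝ) ≤ (k : ℝ) + 1 := by exact_mod_cast hpair
    linarith
end

section
/- Let n ≥ 1 and a ≥ 0 be integers, let x₁, …, x_r be distinct points of ℂⁿ, and let k₁, …, k_r be positive integers with k₁ + ⋯ + k_r ≤ a + 1. For each i, let 𝔪_{xᵢ} ⊆ ℂ[X₁, …, Xₙ] be the maximal ideal generated by X₁ − xᵢ₁, …, Xₙ − xᵢₙ. Then the ℂ-linear map from the space of polynomials of total degree at most a to ∏_{i=1}^r ℂ[X₁, …, Xₙ]/𝔪_{xᵢ}^{kᵢ}, sending a polynomial P to the tuple of its residue classes modulo 𝔪_{xᵢ}^{kᵢ}, is surjective. -/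
open MvPolynomial

section Aux

variable (n : ℕ)

private noncomputable abbrev mId (c : Fin n → ℂ) : Ideal (MvPolynomial (Fin n) ℂ) :=
  Ideal.span (Set.range fun j : Fin n => X j - C (c j))

private lemma aux_deg_lin (j : Fin n) (b : ℂ) :
    (X j - C b : MvPolynomial (Fin n) ℂ).totalDegree ≤ 1 := by
  rw [sub_eq_add_neg, ← C_neg]
  refine (totalDegree_add _ _).trans ?_
  simp [totalDegree_X, totalDegree_C]

private lemma aux_totalDegree_aeval_le (f : Fin n → MvPolynomial (Fin n) ℂ)
    (hf : ∀ j, (f j).totalDegree ≤ 1) (P : MvPolynomial (Fin n) ℂ) :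
    (aeval f P).totalDegree ≤ P.totalDegree := by
  conv_lhs => rw [P.as_sum]
  rw [map_sum]
  refine (totalDegree_finset_sum _ _).trans (Finset.sup_le fun v hv => ?_)
  rw [aeval_monomial]
  refine (totalDegree_mul _ _).trans ?_
  have h1 : (algebraMap ℂ (MvPolynomial (Fin n) ℂ) (coeff v P)).totalDegree = 0 :=
    totalDegree_C _
  rw [h1, zero_add]
  refine le_trans ?_ (le_totalDegree hv)
  rw [Finsupp.prod]
  refine (totalDegree_finset_prod _ _).trans ?_
  rw [Finsupp.sum]
  refine Finset.sum_le_sum fun j _ => ?_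
  calc (f j ^ v j).totalDegree ≤ v j * (f j).totalDegree := totalDegree_pow _ _
    _ ≤ v j * 1 := Nat.mul_le_mul_left _ (hf j)
    _ = v j := Nat.mul_one _

private lemma aux_prod_mem_pow {R : Type*} [CommRing R] (I : Ideal R) {ι : Type*}
    (s : Finset ι) (f : ι → R) (e : ι → ℕ) (hf : ∀ i ∈ s, f i ∈ I) :
    (∏ i ∈ s, f i ^ e i) ∈ I ^ (∑ i ∈ s, e i) := by
  classical
  induction s using Finset.induction_on with
  | empty => simp
  | insert a s hi ih =>
    rw [Finset.prod_insert hi, Finset.sum_insert hi, pow_add]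
    exact Ideal.mul_mem_mul (Ideal.pow_mem_pow (hf a (Finset.mem_insert_self a s)) _)
      (ih fun i his => hf i (Finset.mem_insert_of_mem his))

private lemma aux_mem_pow_span_X (k : ℕ) (P : MvPolynomial (Fin n) ℂ)
    (h : ∀ d ∈ P.support, k ≤ d.sum fun _ e => e) :
    P ∈ (Ideal.span (Set.range (X : Fin n → MvPolynomial (Fin n) ℂ))) ^ k := by
  rw [P.as_sum]
  refine Ideal.sum_mem _ fun v hv => ?_
  rw [monomial_eq]
  refine Ideal.mul_mem_left _ _ ?_
  refine Ideal.pow_le_pow_right (h v hv) ?_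
  rw [Finsupp.prod, Finsupp.sum]
  exact aux_prod_mem_pow _ _ _ _ fun j _ => Ideal.subset_span ⟨j, rfl⟩

private lemma aux_sub_C_eval_mem (c : Fin n → ℂ) (P : MvPolynomial (Fin n) ℂ) :
    P - C (eval c P) ∈ mId n c := by
  induction P using MvPolynomial.induction_on with
  | C b => simp
  | add p q hp hq =>
    have h : p + q - C (eval c (p + q)) = (p - C (eval c p)) + (q - C (eval c q)) := by
      rw [map_add, map_add]; ring
    rw [h]; exact Ideal.add_mem _ hp hq
  | mul_X p j hp =>
    have h : p * X j - C (eval c (p * X j)) =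
        p * (X j - C (c j)) + C (c j) * (p - C (eval c p)) := by
      rw [map_mul, eval_X, map_mul]; ring
    rw [h]
    exact Ideal.add_mem _
      (Ideal.mul_mem_left _ _ (Ideal.subset_span ⟨j, rfl⟩))
      (Ideal.mul_mem_left _ _ hp)

private lemma aux_comp_id (c : Fin n → ℂ) (P : MvPolynomial (Fin n) ℂ) :
    aeval (fun j : Fin n => X j - C (c j)) (aeval (fun j : Fin n => X j + C (c j)) P) = P := by
  have h : ((aeval (fun j : Fin n => X j - C (c j))).comp
      (aeval (fun j : Fin n => X j + C (c j))) : MvPolynomial (Fin n) ℂ →ₐ[ℂ]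
        MvPolynomial (Fin n) ℂ) = AlgHom.id ℂ _ := by
    apply MvPolynomial.algHom_ext; intro j; simp
  exact congrArg (fun f : MvPolynomial (Fin n) ℂ →ₐ[ℂ] MvPolynomial (Fin n) ℂ => f P) h

private lemma aux_comp_id' (c : Fin n → ℂ) (P : MvPolynomial (Fin n) ℂ) :
    aeval (fun j : Fin n => X j + C (c j)) (aeval (fun j : Fin n => X j - C (c j)) P) = P := by
  have h : ((aeval (fun j : Fin n => X j + C (c j))).comp
      (aeval (fun j : Fin n => X j - C (c j))) : MvPolynomial (Fin n) ℂ →ₐ[ℂ]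
        MvPolynomial (Fin n) ℂ) = AlgHom.id ℂ _ := by
    apply MvPolynomial.algHom_ext; intro j; simp
  exact congrArg (fun f : MvPolynomial (Fin n) ℂ →ₐ[ℂ] MvPolynomial (Fin n) ℂ => f P) h

private lemma aux_map_pow (c : Fin n → ℂ) (k : ℕ) (P : MvPolynomial (Fin n) ℂ)
    (h : aeval (fun j : Fin n => X j + C (c j)) P ∈
      (Ideal.span (Set.range (X : Fin n → MvPolynomial (Fin n) ℂ))) ^ k) :
    P ∈ (mId n c) ^ k := by
  have hmap : Ideal.map (aeval (fun j : Fin n => X j - C (c j)) :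
      MvPolynomial (Fin n) ℂ →ₐ[ℂ] MvPolynomial (Fin n) ℂ).toRingHom
      ((Ideal.span (Set.range (X : Fin n → MvPolynomial (Fin n) ℂ))) ^ k) ≤ (mId n c) ^ k := by
    rw [Ideal.map_pow]
    refine Ideal.pow_right_mono ?_ _
    rw [Ideal.map_span]
    refine Ideal.span_le.2 ?_
    rintro - ⟨-, ⟨j, rfl⟩, rfl⟩
    exact Ideal.subset_span ⟨j, by simp⟩
  have h2 := hmap (Ideal.mem_map_of_mem _ h)
  rwa [show (aeval (fun j : Fin n => X j - C (c j)) :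
      MvPolynomial (Fin n) ℂ →ₐ[ℂ] MvPolynomial (Fin n) ℂ).toRingHom
      (aeval (fun j : Fin n => X j + C (c j)) P) = P from aux_comp_id n c P] at h2

/-- Taylor truncation: every polynomial is congruent mod `𝔪_c^k` to one of degree `≤ k-1`. -/
private lemma aux_exists_low_degree_rep (c : Fin n → ℂ) (k : ℕ) (hk : 1 ≤ k)
    (P : MvPolynomial (Fin n) ℂ) :
    ∃ h : MvPolynomial (Fin n) ℂ, h.totalDegree ≤ k - 1 ∧ P - h ∈ (mId n c) ^ k := by
  set Q := aeval (fun j : Fin n => X j + C (c j)) P with hQ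
  set T := ∑ i ∈ Finset.range k, homogeneousComponent i Q with hT
  have hTdeg : T.totalDegree ≤ k - 1 := by
    refine (totalDegree_finset_sum _ _).trans (Finset.sup_le fun i hi => ?_)
    rw [totalDegree]
    refine Finset.sup_le fun d hd => ?_
    have hco := mem_support_iff.1 hd
    rw [coeff_homogeneousComponent] at hco
    have hdi : d.degree = i := by by_contra h; simp [h] at hco
    have hde : (d.sum fun _ e => e) = d.degree := rfl
    rw [hde, hdi]
    have := Finset.mem_range.1 hi
    omega
  have hQT : Q - T ∈ (Ideal.span (Set.range (X : Fin n → MvPolynomial (Fin n) ℂ))) ^ k := by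
    refine aux_mem_pow_span_X n k _ fun d hd => ?_
    by_contra hlt
    push_neg at hlt
    apply mem_support_iff.1 hd
    have hcoT : coeff d T = coeff d Q := by
      rw [hT, coeff_sum]
      simp only [coeff_homogeneousComponent]
      rw [Finset.sum_ite_eq (Finset.range k) _ (fun _ => coeff d Q)]
      have hde : (d.sum fun _ e => e) = d.degree := rfl
      rw [if_pos (Finset.mem_range.2 (hde ▸ hlt))]
    rw [coeff_sub, hcoT, sub_self]
  refine ⟨aeval (fun j : Fin n => X j - C (c j)) T, ?_, ?_⟩
  · exact (aux_totalDegree_aeval_le n _ (fun j => aux_deg_lin n j _) T).trans hTdeg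
  · refine aux_map_pow n c k _ ?_
    rw [map_sub, aux_comp_id' n c T, ← hQ]
    exact hQT

private lemma aux_isUnit_mk (c : Fin n → ℂ) (k : ℕ) (g : MvPolynomial (Fin n) ℂ)
    (hg : eval c g ≠ 0) : IsUnit (Ideal.Quotient.mk ((mId n c) ^ k) g) := by
  have hdecomp : g = C (eval c g) + (g - C (eval c g)) := by ring
  rw [hdecomp, map_add]
  refine IsNilpotent.isUnit_add_left_of_commute ?_ ?_ (Commute.all _ _)
  · refine ⟨k, ?_⟩
    rw [← map_pow, Ideal.Quotient.eq_zero_iff_mem]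
    exact Ideal.pow_mem_pow (aux_sub_C_eval_mem n c g) k
  · have : IsUnit (eval c g) := isUnit_iff_ne_zero.2 hg
    exact this.map ((Ideal.Quotient.mk ((mId n c) ^ k)).comp C)

end Aux

/-- Example 5.1, sufficiency (simultaneous jet interpolation): for distinct
points `x₁, …, x_r ∈ ℂⁿ` and positive integers with `k₁ + ⋯ + k_r ≤ a + 1`,
the `ℂ`-linear jet-evaluation map from polynomials of total degree `≤ a` to
`∏ᵢ ℂ[X₁,…,Xₙ]/𝔪_{xᵢ}^{kᵢ}` is surjective. -/
theorem stmt_7 (n : ℕ) (hn : 1 ≤ n) (a r : ℕ)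
    (x : Fin r → (Fin n → ℂ)) (hx : Function.Injective x)
    (k : Fin r → ℕ) (hk : ∀ i, 1 ≤ k i) (hsum : ∑ i, k i ≤ a + 1) :
    Function.Surjective
      ((LinearMap.pi fun i : Fin r =>
          (Ideal.Quotient.mkₐ ℂ
            ((Ideal.span (Set.range fun j : Fin n =>
              X j - C (x i j))) ^ k i)).toLinearMap) ∘ₗ
        (MvPolynomial.restrictTotalDegree (Fin n) ℂ a).subtype) := by
  classical
  intro q
  have hne : Nonempty (Fin n) := ⟨⟨0, hn⟩⟩
  -- choose separating coordinates
  have hsep : ∀ i j : Fin r, ∃ t : Fin n, i ≠ j → x i t ≠ x j t := by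
    intro i j
    by_cases hij : i = j
    · exact ⟨Classical.arbitrary _, fun h => absurd hij h⟩
    · have : x i ≠ x j := fun h => hij (hx h)
      obtain ⟨t, ht⟩ := Function.ne_iff.1 this
      exact ⟨t, fun _ => ht⟩
  choose t ht using hsep
  set ℓ : Fin r → Fin r → MvPolynomial (Fin n) ℂ :=
    fun i j => X (t i j) - C (x j (t i j)) with hℓ
  set g : Fin r → MvPolynomial (Fin n) ℂ :=
    fun i => ∏ j ∈ Finset.univ.erase i, ℓ i j ^ k j with hg
  -- evaluation of g i at x i is nonzero
  have hgeval : ∀ i, eval (x i) (g i) ≠ 0 := by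
    intro i
    simp only [hg, hℓ, map_prod, map_pow, map_sub, eval_X, eval_C]
    refine Finset.prod_ne_zero_iff.2 fun j hj => ?_
    refine pow_ne_zero _ (sub_ne_zero.2 ?_)

    exact ht i j ((Finset.mem_erase.1 hj).1.symm)
  -- degree of g i
  have hgdeg : ∀ i, (g i).totalDegree ≤ ∑ j ∈ Finset.univ.erase i, k j := by
    intro i
    refine (totalDegree_finset_prod _ _).trans (Finset.sum_le_sum fun j _ => ?_)
    calc (ℓ i j ^ k j).totalDegree ≤ k j * (ℓ i j).totalDegree := totalDegree_pow _ _
      _ ≤ k j * 1 := Nat.mul_le_mul_left _ (aux_deg_lin n _ _)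
      _ = k j := Nat.mul_one _
  -- g i lies in the other ideals
  have hgmem : ∀ i j, j ≠ i → g i ∈ (mId n (x j)) ^ (k j) := by
    intro i j hji
    have hj : j ∈ Finset.univ.erase i := Finset.mem_erase.2 ⟨hji, Finset.mem_univ j⟩
    simp only [hg]
    rw [← Finset.mul_prod_erase _ _ hj]
    refine Ideal.mul_mem_right _ _ (Ideal.pow_mem_pow ?_ _)
    exact Ideal.subset_span ⟨t i j, rfl⟩
  -- lift the target
  have hQex : ∀ i, ∃ Qi, Ideal.Quotient.mk ((mId n (x i)) ^ (k i)) Qi = q i := fun i =>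
    Ideal.Quotient.mk_surjective (q i)
  choose Q hQ using hQex
  -- inverses of g i mod the i-th ideal
  have hVex : ∀ i, ∃ Vi, Ideal.Quotient.mk ((mId n (x i)) ^ (k i)) (g i * Vi) = 1 := by
    intro i
    obtain ⟨v, hv⟩ := isUnit_iff_exists_inv.1 (aux_isUnit_mk n (x i) (k i) (g i) (hgeval i))
    obtain ⟨Vi, rfl⟩ := Ideal.Quotient.mk_surjective v
    exact ⟨Vi, by rw [map_mul]; exact hv⟩
  choose V hV using hVex
  -- low degree representatives
  have hhex := fun i => aux_exists_low_degree_rep n (x i) (k i) (hk i) (V i * Q i)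
  choose h hhdeg hhmem using hhex
  set P : MvPolynomial (Fin n) ℂ := ∑ i, g i * h i with hP
  have hPdeg : P.totalDegree ≤ a := by
    refine (totalDegree_finset_sum _ _).trans (Finset.sup_le fun i _ => ?_)
    refine (totalDegree_mul _ _).trans ?_
    have h1 := hgdeg i
    have h2 := hhdeg i
    have h3 : k i + ∑ j ∈ Finset.univ.erase i, k j = ∑ j, k j :=
      Finset.add_sum_erase _ _ (Finset.mem_univ i)
    have h4 := hk i
    omega
  refine ⟨⟨P, (mem_restrictTotalDegree (σ := Fin n) (R := ℂ) (m := a) P).2 hPdeg⟩, ?_⟩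
  funext i
  simp only [LinearMap.comp_apply, Submodule.subtype_apply, LinearMap.pi_apply,
    AlgHom.toLinearMap_apply, Ideal.Quotient.mkₐ_eq_mk]
  have hstep : ∀ j, Ideal.Quotient.mk ((mId n (x i)) ^ (k i)) (g j * h j) =
      if j = i then q i else 0 := by
    intro j
    by_cases hji : j = i
    · subst hji
      have hh : Ideal.Quotient.mk ((mId n (x j)) ^ (k j)) (h j) =
          Ideal.Quotient.mk ((mId n (x j)) ^ (k j)) (V j * Q j) :=
        ((Ideal.Quotient.eq).2 (hhmem j)).symm
      rw [if_pos rfl, map_mul, hh, ← hQ j, show (Ideal.Quotient.mk ((mId n (x j)) ^ (k j)) (g j)) *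
        (Ideal.Quotient.mk ((mId n (x j)) ^ (k j)) (V j * Q j)) =
        (Ideal.Quotient.mk ((mId n (x j)) ^ (k j)) (g j * V j)) *
        (Ideal.Quotient.mk ((mId n (x j)) ^ (k j)) (Q j)) by rw [← map_mul, ← map_mul]; ring_nf,
        hV j, one_mul]
    · rw [if_neg hji, Ideal.Quotient.eq_zero_iff_mem]
      exact Ideal.mul_mem_right _ _ (hgmem j i (Ne.symm hji))
  rw [hP, map_sum (Ideal.Quotient.mk ((mId n (x i)) ^ (k i))) (fun j => g j * h j) Finset.univ]
  rw [Finset.sum_congr rfl fun j _ => hstep j]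
  simp
end
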